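/- For a symmetric real matrix R with eigendecomposition R = QΛQ^T where Λ = diag(λ_1,…,λ_n) with |λ_1| ≥ … ≥ |λ_n| ≥ 0 and all λ_i ≥ 0 for i ≤ d, the matrix U = Q_d √(Λ_d) (columns of Q corresponding to the d largest-magnitude eigenvalues, scaled by square roots of the eigenvalues) minimizes ‖UU^T − R‖_F over all n×d matrices U, provided λ_1,…,λ_d are the d largest eigenvalues and they are nonnegative; i.e., this is an optimal rank-≤d positive-semidefinite approximation of R in Frobenius norm among matrices of the form UU^T. -/

import Mathlib

/-!
Conjugating by `Q` reduces everything to `Λ = diagonal lam` and `V = Qᵀ U`, and the candidate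
has error `∑_{i ≥ d} lam i ^ 2`. For an arbitrary `V` with `d` columns, `ker Vᵀ` has dimension at
least `n - d`, and on it `V Vᵀ - Λ` acts as `-Λ`. Bessel's inequality for an orthonormal basis
`w` of this kernel gives `‖V Vᵀ - Λ‖_F² ≥ ∑ i, lam i ^ 2 * p i` with weights
`p i = ∑ k, w k i ^ 2 ∈ [0, 1]` of total mass at least `n - d`. As the `lam i ^ 2` decrease, such a
weighting is at least the sum of the `n - d` smallest of them.
-/

open Matrix Finset

variable {ι κ τ : Type*} [Fintype ι] [Fintype κ] [Fintype τ]

theorem sum_sq_eq_trace_transpose_mul (A : Matrix ι κ ℝ) :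
    ∑ i, ∑ j, A i j ^ 2 = trace (Aᵀ * A) := by
  rw [trace, sum_comm]
  simp [Matrix.mul_apply, sq]

theorem sum_sq_orthogonal_conj [DecidableEq ι] {Q : Matrix ι ι ℝ}
    (hQ : Q ∈ orthogonalGroup ι ℝ) (M : Matrix ι ι ℝ) :
    ∑ i, ∑ j, (Q * M * Qᵀ) i j ^ 2 = ∑ i, ∑ j, M i j ^ 2 := by
  have hQ' : Qᵀ * Q = 1 := (mem_orthogonalGroup_iff' ι ℝ).mp hQ
  have hgram : (Q * M * Qᵀ)ᵀ * (Q * M * Qᵀ) = Q * (Mᵀ * M) * Qᵀ := by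
    simp only [transpose_mul, transpose_transpose, Matrix.mul_assoc]
    rw [← Matrix.mul_assoc Qᵀ Q, hQ', Matrix.one_mul]
  rw [sum_sq_eq_trace_transpose_mul, sum_sq_eq_trace_transpose_mul, hgram, trace_mul_cycle, hQ',
    Matrix.one_mul]

theorem sum_sq_diagonal [DecidableEq ι] (g : ι → ℝ) :
    ∑ i, ∑ j, diagonal g i j ^ 2 = ∑ i, g i ^ 2 := by
  simp [diagonal_apply, ite_pow]

theorem Orthonormal.sum_sq_dotProduct_le {w : τ → EuclideanSpace ℝ ι}
    (hw : Orthonormal ℝ w) (x : ι → ℝ) : ∑ k, (x ⬝ᵥ (w k).ofLp) ^ 2 ≤ ∑ i, x i ^ 2 := by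
  simpa [EuclideanSpace.inner_eq_star_dotProduct, EuclideanSpace.real_norm_sq_eq, dotProduct_comm]
    using hw.sum_inner_products_le (WithLp.toLp 2 x) (s := univ)

theorem Orthonormal.sum_sq_apply_le_one [DecidableEq ι] {w : τ → EuclideanSpace ℝ ι}
    (hw : Orthonormal ℝ w) (i : ι) : ∑ k, (w k).ofLp i ^ 2 ≤ 1 := by
  simpa [Pi.single_apply] using hw.sum_sq_dotProduct_le (Pi.single i 1)

theorem Orthonormal.sum_sum_sq_apply {w : τ → EuclideanSpace ℝ ι} (hw : Orthonormal ℝ w) :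
    ∑ i, ∑ k, (w k).ofLp i ^ 2 = Fintype.card τ := by
  rw [sum_comm]
  simp [← EuclideanSpace.real_norm_sq_eq, hw.1]

theorem Orthonormal.sum_sum_sq_mulVec_le {w : τ → EuclideanSpace ℝ ι} (hw : Orthonormal ℝ w)
    (A : Matrix κ ι ℝ) : ∑ k, ∑ a, (A *ᵥ (w k).ofLp) a ^ 2 ≤ ∑ a, ∑ b, A a b ^ 2 := by
  rw [sum_comm]
  exact sum_le_sum fun a _ => hw.sum_sq_dotProduct_le (A a)

theorem card_le_card_add_finrank_ker_toLpLin [DecidableEq ι] (A : Matrix κ ι ℝ) :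
    Fintype.card ι ≤ Fintype.card κ + Module.finrank ℝ (LinearMap.ker (toLpLin 2 2 A)) := by
  have hrank := LinearMap.finrank_range_add_finrank_ker (toLpLin 2 2 A)
  have hrange := Submodule.finrank_le (LinearMap.range (toLpLin 2 2 A))
  simp only [finrank_euclideanSpace] at hrank hrange
  omega

theorem exists_weights_le_sum_sq_mul_transpose_sub_diagonal [DecidableEq ι] (V : Matrix ι κ ℝ)
    (μ : ι → ℝ) :
    ∃ p : ι → ℝ, 0 ≤ p ∧ p ≤ 1 ∧ (Fintype.card ι : ℝ) - Fintype.card κ ≤ ∑ i, p i ∧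
      ∑ i, μ i ^ 2 * p i ≤ ∑ a, ∑ b, (V * Vᵀ - diagonal μ) a b ^ 2 := by
  set K := LinearMap.ker (toLpLin 2 2 Vᵀ)
  set w : Fin (Module.finrank ℝ K) → EuclideanSpace ℝ ι := fun k => stdOrthonormalBasis ℝ K k
  have hw : Orthonormal ℝ w := (stdOrthonormalBasis ℝ K).orthonormal.comp_linearIsometry K.subtypeₗᵢ
  have hker : ∀ k, Vᵀ *ᵥ (w k).ofLp = 0 := fun k => by
    simpa only [ofLp_toLpLin, toLin'_apply, WithLp.ofLp_zero] using
      congrArg WithLp.ofLp (LinearMap.mem_ker.mp (stdOrthonormalBasis ℝ K k).2)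
  refine ⟨fun i => ∑ k, (w k).ofLp i ^ 2, fun i => sum_nonneg fun k _ => sq_nonneg _,
    hw.sum_sq_apply_le_one, ?_, ?_⟩
  · rw [hw.sum_sum_sq_apply, Fintype.card_fin, sub_le_iff_le_add']
    exact_mod_cast card_le_card_add_finrank_ker_toLpLin Vᵀ
  · have hmulVec : ∀ k, (V * Vᵀ - diagonal μ) *ᵥ (w k).ofLp = -(μ * (w k).ofLp) := fun k => by
      ext i
      simp [sub_mulVec, ← mulVec_mulVec, hker, mulVec_diagonal]
    calc ∑ i, μ i ^ 2 * ∑ k, (w k).ofLp i ^ 2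
        = ∑ k, ∑ i, ((V * Vᵀ - diagonal μ) *ᵥ (w k).ofLp) i ^ 2 := by
          simp only [hmulVec, mul_sum]
          rw [sum_comm]
          simp [mul_pow]
      _ ≤ _ := hw.sum_sum_sq_mulVec_le _

theorem Finset.sum_compl_le_sum_mul_of_le [DecidableEq ι] {S : Finset ι} {μ p : ι → ℝ}
    (hμ : 0 ≤ μ) (hS : ∀ i ∈ S, ∀ j ∉ S, μ j ≤ μ i) (hp0 : 0 ≤ p) (hp1 : p ≤ 1)
    (hp : (Fintype.card ι : ℝ) - #S ≤ ∑ i, p i) :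
    ∑ i ∈ Sᶜ, μ i ≤ ∑ i, μ i * p i := by
  rcases Sᶜ.eq_empty_or_nonempty with hempty | hne
  · rw [hempty, sum_empty]
    exact sum_nonneg fun i _ => mul_nonneg (hμ i) (hp0 i)
  obtain ⟨j₀, hj₀, hmax⟩ := Sᶜ.exists_max_image μ hne
  set t : ι → ℝ := fun i => if i ∈ Sᶜ then 1 else 0
  -- `μ j₀` separates the values on `S` from those off `S`, and `∑ i, (t i - p i) ≤ 0`.
  have hpoint : ∀ i, μ i * (t i - p i) ≤ μ j₀ * (t i - p i) := fun i => by
    by_cases hi : i ∈ S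
    · simp only [t, mem_compl, hi, not_true, if_false, zero_sub, mul_neg, neg_le_neg_iff]
      exact mul_le_mul_of_nonneg_right (hS i hi j₀ (mem_compl.mp hj₀)) (hp0 i)
    · simp only [t, mem_compl, hi, not_false_eq_true, if_true]
      exact mul_le_mul_of_nonneg_right (hmax i (mem_compl.mpr hi))
        (sub_nonneg.mpr (hp1 i))
  have ht : ∑ i, t i = Fintype.card ι - #S := by
    simp only [t, sum_boole, filter_mem_eq_inter, univ_inter, card_compl,
      Nat.cast_sub (card_le_univ S)]
  have hsum := sum_le_sum fun i (_ : i ∈ univ) => hpoint i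
  simp only [mul_sub, sum_sub_distrib, ← mul_sum, ht] at hsum
  have htail : ∑ i ∈ Sᶜ, μ i = ∑ i, μ i * t i := by
    simp only [t, mul_ite, mul_one, mul_zero, sum_ite_mem, univ_inter]
  nlinarith [mul_nonneg (hμ j₀) (sub_nonneg.mpr hp)]

noncomputable def truncatedFactor (Q : Matrix ι ι ℝ) (lam : ι → ℝ) (e : κ ↪ ι) : Matrix ι κ ℝ :=
  of fun i j => Q i (e j) * √(lam (e j))

theorem truncatedFactor_mul_transpose [DecidableEq ι] (Q : Matrix ι ι ℝ) {lam : ι → ℝ}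
    {e : κ ↪ ι} (hlam : ∀ j, 0 ≤ lam (e j)) :
    truncatedFactor Q lam e * (truncatedFactor Q lam e)ᵀ =
      Q * diagonal (fun i => if i ∈ univ.map e then lam i else 0) * Qᵀ := by
  ext a b
  have hsqrt : ∀ j, Q a (e j) * √(lam (e j)) * (Q b (e j) * √(lam (e j))) =
      Q a (e j) * lam (e j) * Q b (e j) := fun j => by
    rw [mul_mul_mul_comm, Real.mul_self_sqrt (hlam j), mul_right_comm]
  calc (truncatedFactor Q lam e * (truncatedFactor Q lam e)ᵀ) a b
      = ∑ j, Q a (e j) * lam (e j) * Q b (e j) := by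
        simp only [truncatedFactor, mul_apply, transpose_apply, of_apply, hsqrt]
    _ = ∑ i ∈ univ.map e, Q a i * lam i * Q b i :=
        (sum_map univ e fun i => Q a i * lam i * Q b i).symm
    _ = _ := by
        rw [mul_apply]
        simp only [mul_diagonal, transpose_apply, mul_ite, ite_mul, mul_zero, zero_mul,
          sum_ite_mem, univ_inter]

theorem sum_sq_truncatedFactor_mul_transpose_sub [DecidableEq ι] {Q : Matrix ι ι ℝ}
    (hQ : Q ∈ orthogonalGroup ι ℝ) {lam : ι → ℝ} {e : κ ↪ ι} (hlam : ∀ j, 0 ≤ lam (e j)) :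
    ∑ a, ∑ b, (truncatedFactor Q lam e * (truncatedFactor Q lam e)ᵀ - Q * diagonal lam * Qᵀ) a b ^ 2
      = ∑ i ∈ (univ.map e)ᶜ, lam i ^ 2 := by
  rw [truncatedFactor_mul_transpose Q hlam, ← Matrix.sub_mul, ← Matrix.mul_sub, diagonal_sub,
    sum_sq_orthogonal_conj hQ, sum_sq_diagonal, ← sum_compl_add_sum (univ.map e),
    sum_eq_zero (s := univ.map e) fun i hi => by rw [if_pos hi, sub_self, zero_pow two_ne_zero],
    add_zero]
  exact sum_congr rfl fun i hi => by rw [if_neg (mem_compl.mp hi), zero_sub, neg_sq]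

theorem eckart_young_symmetric_general (n d : ℕ) (hd : d ≤ n)
    (R Q : Matrix (Fin n) (Fin n) ℝ) (lam : Fin n → ℝ)
    (hQ : Q ∈ Matrix.orthogonalGroup (Fin n) ℝ)
    (hdecomp : R = Q * Matrix.diagonal lam * Qᵀ)
    (hsorted : ∀ i j : Fin n, i ≤ j → |lam j| ≤ |lam i|)
    (htopnonneg : ∀ i : Fin n, (i : ℕ) < d → 0 ≤ lam i) :
    ∀ U : Matrix (Fin n) (Fin d) ℝ,
      (∑ a, ∑ b,
        ((Matrix.of fun i (j : Fin d) =>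
            Q i (Fin.castLE hd j) * Real.sqrt (lam (Fin.castLE hd j))) *
         (Matrix.of fun i (j : Fin d) =>
            Q i (Fin.castLE hd j) * Real.sqrt (lam (Fin.castLE hd j)))ᵀ - R) a b ^ 2)
      ≤ ∑ a, ∑ b, (U * Uᵀ - R) a b ^ 2 := by
  intro U
  subst hdecomp
  set S := univ.map (Fin.castLEEmb hd)
  have hdominant : ∀ i ∈ S, ∀ j ∉ S, lam j ^ 2 ≤ lam i ^ 2 := by
    intro i hi j hj
    obtain ⟨k, -, rfl⟩ := mem_map.mp hi
    have hdj : d ≤ (j : ℕ) := not_lt.mp fun hjd => hj (mem_map.mpr ⟨⟨j, hjd⟩, mem_univ _, rfl⟩)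
    exact sq_le_sq.mpr (hsorted _ _ (Fin.le_def.mpr (k.isLt.le.trans hdj)))
  obtain ⟨p, hp0, hp1, hpsum, hlower⟩ :=
    exists_weights_le_sum_sq_mul_transpose_sub_diagonal (Qᵀ * U) lam
  have hconj : Q * ((Qᵀ * U) * (Qᵀ * U)ᵀ) * Qᵀ = U * Uᵀ := by
    have hQU : Q * (Qᵀ * U) = U := by
      rw [← Matrix.mul_assoc, (mem_orthogonalGroup_iff _ _).mp hQ, Matrix.one_mul]
    conv_rhs => rw [← hQU]
    simp only [transpose_mul, Matrix.mul_assoc]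
  calc _ = ∑ i ∈ Sᶜ, lam i ^ 2 :=
        sum_sq_truncatedFactor_mul_transpose_sub hQ fun j => htopnonneg _ j.isLt
    _ ≤ ∑ i, lam i ^ 2 * p i :=
        sum_compl_le_sum_mul_of_le (fun i => sq_nonneg _) hdominant hp0 hp1
          (by simpa [S] using hpsum)
    _ ≤ ∑ a, ∑ b, ((Qᵀ * U) * (Qᵀ * U)ᵀ - diagonal lam) a b ^ 2 := hlower
    _ = _ := by
        rw [← sum_sq_orthogonal_conj hQ, Matrix.mul_sub, Matrix.sub_mul, hconj]

/-- Eckart–Young–Mirsky specialized to symmetric matrices.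
Let `R = Q Λ Qᵀ` be an eigendecomposition of a real symmetric matrix `R`, with `Q`
orthogonal and the eigenvalues `λ` sorted by decreasing magnitude. Suppose the first
`d` eigenvalues are nonnegative and are the `d` largest eigenvalues. Then the matrix
`U₀ = Q_d √(Λ_d)` (the first `d` columns of `Q` scaled by square roots of the
corresponding eigenvalues) minimizes `‖U Uᵀ − R‖_F` over all `n × d` real matrices
`U` (squared Frobenius norm written as a sum of squared entries). -/
theorem eckart_young_symmetric (n d : ℕ) (hd : d ≤ n)
    (R Q : Matrix (Fin n) (Fin n) ℝ) (lam : Fin n → ℝ)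
    (hR : R.IsSymm)
    (hQ : Q ∈ Matrix.orthogonalGroup (Fin n) ℝ)
    (hdecomp : R = Q * Matrix.diagonal lam * Qᵀ)
    (hsorted : ∀ i j : Fin n, i ≤ j → |lam j| ≤ |lam i|)
    (htopnonneg : ∀ i : Fin n, (i : ℕ) < d → 0 ≤ lam i)
    (hlargest : ∀ i j : Fin n, (i : ℕ) < d → d ≤ (j : ℕ) → lam j ≤ lam i) :
    ∀ U : Matrix (Fin n) (Fin d) ℝ,
      (∑ a, ∑ b,
        ((Matrix.of fun i (j : Fin d) =>
            Q i (Fin.castLE hd j) * Real.sqrt (lam (Fin.castLE hd j))) *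
         (Matrix.of fun i (j : Fin d) =>
            Q i (Fin.castLE hd j) * Real.sqrt (lam (Fin.castLE hd j)))ᵀ - R) a b ^ 2)
      ≤ ∑ a, ∑ b, (U * Uᵀ - R) a b ^ 2 :=
  eckart_young_symmetric_general n d hd R Q lam hQ hdecomp hsorted htopnonneg
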